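/- Let Γ be a maximal consistent set in SLKVF_m, i an agent, G = Q × {0,1}, and F_i(Γ) the function domain defined from the dependency lattice of Γ and i. For σ ∈ 2^Q define v_σ : Q → G by v_σ(d) = ⟨d, σ(d)⟩. Then for every finite C ⊆ Q, d ∈ Q, and Σ ⊆ 2^Q: (1) if Σ satisfies the functionality condition for (C,d) (for all σ_1, σ_2 ∈ Σ, σ_1 and σ_2 agreeing on C implies they agree on d) and Kf_i(C,d) ∈ Γ, then there exists f ∈ F_i(Γ) with v_σ(d) = f(v_σ(C)) for all σ ∈ Σ; (2) if Kf_i(C,d) ∉ Γ, then for all σ ∈ Σ and all f ∈ F_i(Γ), v_σ(d) ≠ f(v_σ(C)). -/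

import Mathlib

open scoped Classical

/-! Multiagent language with operators `Kv_i`, `Kf_i` and `K_i`. -/

inductive MFormula (P Q A : Type) : Type where
  | top : MFormula P Q A
  | atom : P → MFormula P Q A
  | Kv : A → Q → MFormula P Q A
  | Kf : A → Finset Q → Q → MFormula P Q A
  | and : MFormula P Q A → MFormula P Q A → MFormula P Q A
  | not : MFormula P Q A → MFormula P Q A
  | K : A → MFormula P Q A → MFormula P Q A

namespace MFormula

variable {P Q A : Type}

/-- Material implication. -/
def imp (φ ψ : MFormula P Q A) : MFormula P Q A :=
  MFormula.not (MFormula.and φ (MFormula.not ψ))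

/-- Falsum. -/
def bot : MFormula P Q A := MFormula.not MFormula.top

end MFormula

variable {P Q A G : Type}

/-- Finite conjunction of a list of formulas. -/
def mconj : List (MFormula P Q A) → MFormula P Q A
  | [] => MFormula.top
  | φ :: l => MFormula.and φ (mconj l)

/-- `φ` is a propositional tautology. -/
def IsTautM (φ : MFormula P Q A) : Prop :=
  ∀ v : MFormula P Q A → Bool,
    v MFormula.top = true →
    (∀ α β, v (MFormula.and α β) = (v α && v β)) →
    (∀ α, v (MFormula.not α) = (! v α)) →
    v φ = true

section MAxioms

variable (P Q A : Type) [LinearOrder Q]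

/-- `⋀_{d ∈ D} Kf_i(C,d)`. -/
def mConjKf (i : A) (C D : Finset Q) : MFormula P Q A :=
  mconj ((D.sort (· ≤ ·)).map fun d => MFormula.Kf i C d)

/-- `⋀_{c ∈ C} Kv_i(c)`. -/
def mConjKv (i : A) (C : Finset Q) : MFormula P Q A :=
  mconj ((C.sort (· ≤ ·)).map fun c => MFormula.Kv i c)

/-- The axioms of the multiagent system `SLKVF_m`. -/
inductive SLKVFm : MFormula P Q A → Prop where
  | taut {φ : MFormula P Q A} : IsTautM φ → SLKVFm φ
  | axK (i : A) (φ ψ : MFormula P Q A) :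
      SLKVFm (MFormula.imp (MFormula.K i (MFormula.imp φ ψ))
        (MFormula.imp (MFormula.K i φ) (MFormula.K i ψ)))
  | axT (i : A) (φ : MFormula P Q A) : SLKVFm (MFormula.imp (MFormula.K i φ) φ)
  | ax4 (i : A) (φ : MFormula P Q A) :
      SLKVFm (MFormula.imp (MFormula.K i φ) (MFormula.K i (MFormula.K i φ)))
  | ax5 (i : A) (φ : MFormula P Q A) :
      SLKVFm (MFormula.imp (MFormula.not (MFormula.K i φ))
        (MFormula.K i (MFormula.not (MFormula.K i φ))))
  | kv4 (i : A) (d : Q) :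
      SLKVFm (MFormula.imp (MFormula.Kv i d) (MFormula.K i (MFormula.Kv i d)))
  | kv5 (i : A) (d : Q) :
      SLKVFm (MFormula.imp (MFormula.not (MFormula.Kv i d))
        (MFormula.K i (MFormula.not (MFormula.Kv i d))))
  | kf4 (i : A) (C : Finset Q) (d : Q) :
      SLKVFm (MFormula.imp (MFormula.Kf i C d) (MFormula.K i (MFormula.Kf i C d)))
  | kf5 (i : A) (C : Finset Q) (d : Q) :
      SLKVFm (MFormula.imp (MFormula.not (MFormula.Kf i C d))
        (MFormula.K i (MFormula.not (MFormula.Kf i C d))))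
  | proj (i : A) {C : Finset Q} {c : Q} : c ∈ C → SLKVFm (MFormula.Kf i C c)
  | tran (i : A) (C D : Finset Q) (e : Q) :
      SLKVFm (MFormula.imp (MFormula.and (mConjKf P Q A i C D) (MFormula.Kf i D e))
        (MFormula.Kf i C e))
  | vf (i : A) (C : Finset Q) (d : Q) :
      SLKVFm (MFormula.imp (MFormula.and (mConjKv P Q A i C) (MFormula.Kf i C d))
        (MFormula.Kv i d))

end MAxioms

/-- Provability with modus ponens and necessitation for each agent. -/
inductive ProvM (Ax : MFormula P Q A → Prop) : MFormula P Q A → Prop where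
  | ax {φ : MFormula P Q A} : Ax φ → ProvM Ax φ
  | mp {φ ψ : MFormula P Q A} : ProvM Ax (MFormula.imp φ ψ) → ProvM Ax φ → ProvM Ax ψ
  | nec (i : A) {φ : MFormula P Q A} : ProvM Ax φ → ProvM Ax (MFormula.K i φ)

/-- Consistency: no finite conjunction of members proves `⊥`. -/
def ConsistentM (Ax : MFormula P Q A → Prop) (Γ : Set (MFormula P Q A)) : Prop :=
  ¬ ∃ L : List (MFormula P Q A),
      (∀ φ ∈ L, φ ∈ Γ) ∧ ProvM Ax (MFormula.imp (mconj L) MFormula.bot)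

/-- Maximal consistency. -/
def MCSM (Ax : MFormula P Q A → Prop) (Γ : Set (MFormula P Q A)) : Prop :=
  ConsistentM Ax Γ ∧ ∀ φ : MFormula P Q A, φ ∈ Γ ∨ MFormula.not φ ∈ Γ

/-- A function domain on `G`. -/
abbrev FnDom (G : Type) : Type := Set (Σ n : ℕ, (Fin n → G) → G)

/-- `F` contains all projection functions. -/
def hasProjections (F : FnDom G) : Prop :=
  ∀ (j : ℕ) (k : Fin j), (⟨j, fun x => x k⟩ : Σ n : ℕ, (Fin n → G) → G) ∈ F

/-- `F` is closed under function composition. -/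
def closedComp (F : FnDom G) : Prop :=
  ∀ (n m : ℕ), 0 < n → ∀ f : (Fin n → G) → G,
    (⟨n, f⟩ : Σ n : ℕ, (Fin n → G) → G) ∈ F →
    ∀ g : Fin n → (Fin m → G) → G,
      (∀ k, (⟨m, g k⟩ : Σ n : ℕ, (Fin n → G) → G) ∈ F) →
      (⟨m, fun x => f fun k => g k x⟩ : Σ n : ℕ, (Fin n → G) → G) ∈ F

/-- The tuple of values of the variables of `C`, in increasing order. -/
def tupleV [LinearOrder Q] (v : Q → G) (C : Finset Q) : Fin C.card → G :=
  fun k => v ((C.sort (· ≤ ·)).get (Fin.cast (Finset.length_sort (s := C) (· ≤ ·)).symm k))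

/-- The closure operator `cl_i^Γ`, extended to arbitrary sets of variables as the
union of its values on finite subsets. -/
def clOp (Γ : Set (MFormula P Q A)) (i : A) (S : Set Q) : Set Q :=
  {d : Q | ∃ C : Finset Q, ↑C ⊆ S ∧ MFormula.Kf i C d ∈ Γ}

/-- `hs⟨c,n⟩ = cl_i^Γ({c})`, forgetting the second coordinate. -/
def hsOp (Γ : Set (MFormula P Q A)) (i : A) : Q × Bool → Set Q :=
  fun x => clOp Γ i {x.1}

/-- The function domain `F_i(Γ)` determined by the dependency lattice of `Γ` and
`i`: all finitary `f` on `G = Q × {0,1}` with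
`hs(f(x₁,…,xₙ)) ≤ ⋁{hs(x₁),…,hs(xₙ)}` (the join of closed sets being the closure
of their union, and the empty join being `cl(∅)`). -/
def FiG (Γ : Set (MFormula P Q A)) (i : A) : FnDom (Q × Bool) :=
  {p : Σ n : ℕ, (Fin n → Q × Bool) → Q × Bool |
    ∀ x : Fin p.1 → Q × Bool,
      hsOp Γ i (p.2 x) ⊆ clOp Γ i (⋃ k : Fin p.1, hsOp Γ i (x k))}

/-! STATEMENT 17: the key property of `F_i(Γ)`: on any set `Σ` of assignments,
functionality plus `Kf_i(C,d) ∈ Γ` yields a witness in `F_i(Γ)`, while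
`Kf_i(C,d) ∉ Γ` rules out every function of `F_i(Γ)` at every `σ ∈ Σ`. -/

/-- `v_σ(d) = ⟨d, σ(d)⟩`. -/
def vSig {Q : Type} (σ : Q → Bool) : Q → Q × Bool := fun d => (d, σ d)

/-! By PROJ and TRAN, `cl_i^Γ` is a closure operator with `d ∈ cl(C) ↔ Kf_i(C,d) ∈ Γ`. At the
tuple `v_σ(C)` the join `⋁ hs(v_σ(c))` is `cl(C)`, so the condition defining `F_i(Γ)` says there
that the first coordinate of the output lies in `cl(C)`; for the output `v_σ(d)` this is exactly
`Kf_i(C,d) ∈ Γ`, which gives (2). For (1), functionality makes `v_σ(C) ↦ v_σ(d)` a well-defined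
map on `Σ`, and off `Σ` it can be extended by a projection. -/

namespace MFormula

variable {P Q A : Type}

theorem isTautM_imp_imp_and_not_imp_bot (α β : MFormula P Q A) :
    IsTautM (imp (imp α β) (imp (and (not β) α) bot)) := by
  intro v htop hand hnot
  simp only [imp, bot, hand, hnot, htop]
  cases v α <;> cases v β <;> rfl

theorem isTautM_imp_imp_top (α : MFormula P Q A) : IsTautM (imp α (imp top α)) := by
  intro v htop hand hnot
  simp only [imp, hand, hnot, htop]
  cases v α <;> rfl

theorem isTautM_imp_and_comm (α β γ : MFormula P Q A) :
    IsTautM (imp (imp (and α β) γ) (imp (and β α) γ)) := by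
  intro v htop hand hnot
  simp only [imp, hand, hnot]
  cases v α <;> cases v β <;> cases v γ <;> rfl

end MFormula

section Closure

variable {P Q A : Type} {Γ : Set (MFormula P Q A)}

theorem clOp_mono (i : A) : Monotone (clOp Γ i) :=
  fun _ _ hTU _ ⟨C, hC, h⟩ => ⟨C, hC.trans hTU, h⟩

theorem hsOp_vSig (i : A) (σ : Q → Bool) (d : Q) : hsOp Γ i (vSig σ d) = clOp Γ i {d} :=
  rfl

end Closure

namespace MCSM

variable {P Q A : Type} [LinearOrder Q] {Γ : Set (MFormula P Q A)}

theorem mem_of_provable_imp_mconj (hΓ : MCSM (SLKVFm P Q A) Γ) {L : List (MFormula P Q A)}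
    {χ : MFormula P Q A} (hL : ∀ φ ∈ L, φ ∈ Γ)
    (hp : ProvM (SLKVFm P Q A) (MFormula.imp (mconj L) χ)) : χ ∈ Γ := by
  refine (hΓ.2 χ).resolve_right fun hnot => hΓ.1 ⟨MFormula.not χ :: L, ?_, ?_⟩
  · rintro φ (_ | ⟨_, hφ⟩)
    exacts [hnot, hL φ hφ]
  · exact ProvM.mp
      (ProvM.ax (SLKVFm.taut (MFormula.isTautM_imp_imp_and_not_imp_bot _ _))) hp

theorem mem_of_provable (hΓ : MCSM (SLKVFm P Q A) Γ) {χ : MFormula P Q A}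
    (h : ProvM (SLKVFm P Q A) χ) : χ ∈ Γ :=
  hΓ.mem_of_provable_imp_mconj (L := []) (by simp)
    (ProvM.mp (ProvM.ax (SLKVFm.taut (MFormula.isTautM_imp_imp_top χ))) h)

theorem Kf_mem_of_mem (hΓ : MCSM (SLKVFm P Q A) Γ) {i : A} {C : Finset Q} {c : Q}
    (hc : c ∈ C) : MFormula.Kf i C c ∈ Γ :=
  hΓ.mem_of_provable (ProvM.ax (SLKVFm.proj i hc))

theorem Kf_trans (hΓ : MCSM (SLKVFm P Q A) Γ) {i : A} {C D : Finset Q} {e : Q}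
    (hCD : ∀ d ∈ D, MFormula.Kf i C d ∈ Γ) (hDe : MFormula.Kf i D e ∈ Γ) :
    MFormula.Kf i C e ∈ Γ := by
  refine hΓ.mem_of_provable_imp_mconj
    (L := MFormula.Kf i D e :: (D.sort (· ≤ ·)).map fun d => MFormula.Kf i C d) ?_ ?_
  · rintro φ (_ | ⟨_, hφ⟩)
    · exact hDe
    · obtain ⟨d, hd, rfl⟩ := List.mem_map.1 hφ
      exact hCD d ((Finset.mem_sort _).1 hd)
  · exact ProvM.mp (ProvM.ax (SLKVFm.taut (MFormula.isTautM_imp_and_comm _ _ _)))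
      (ProvM.ax (SLKVFm.tran i C D e))

theorem Kf_mono (hΓ : MCSM (SLKVFm P Q A) Γ) {i : A} {C C' : Finset Q} {d : Q}
    (hCC' : C ⊆ C') (h : MFormula.Kf i C d ∈ Γ) : MFormula.Kf i C' d ∈ Γ :=
  hΓ.Kf_trans (fun _ hc => hΓ.Kf_mem_of_mem (hCC' hc)) h

theorem mem_clOp_coe_iff (hΓ : MCSM (SLKVFm P Q A) Γ) {i : A} {C : Finset Q} {d : Q} :
    d ∈ clOp Γ i ↑C ↔ MFormula.Kf i C d ∈ Γ :=
  ⟨fun ⟨_, hC', h⟩ => hΓ.Kf_mono (Finset.coe_subset.1 hC') h, fun h => ⟨C, subset_rfl, h⟩⟩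

theorem subset_clOp (hΓ : MCSM (SLKVFm P Q A) Γ) (i : A) (T : Set Q) : T ⊆ clOp Γ i T :=
  fun c hc => ⟨{c}, by simpa using hc, hΓ.Kf_mem_of_mem (Finset.mem_singleton_self c)⟩

theorem clOp_clOp_subset (hΓ : MCSM (SLKVFm P Q A) Γ) (i : A) (T : Set Q) :
    clOp Γ i (clOp Γ i T) ⊆ clOp Γ i T := by
  rintro e ⟨D, hD, hDe⟩
  choose! C hCT hCd using hD
  refine ⟨D.biUnion C, by simpa using hCT, hΓ.Kf_trans (fun d hd => ?_) hDe⟩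
  exact hΓ.Kf_mono (Finset.subset_biUnion_of_mem C hd) (hCd hd)

def closureOperator (hΓ : MCSM (SLKVFm P Q A) Γ) (i : A) : ClosureOperator (Set Q) :=
  .mk' (clOp Γ i) (clOp_mono i) (hΓ.subset_clOp i) (hΓ.clOp_clOp_subset i)

@[simp]
theorem closureOperator_apply (hΓ : MCSM (SLKVFm P Q A) Γ) (i : A) (T : Set Q) :
    hΓ.closureOperator i T = clOp Γ i T :=
  rfl

end MCSM

theorem range_tupleV_id {Q : Type} [LinearOrder Q] (C : Finset Q) :
    Set.range (tupleV id C) = ↑C := by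
  ext c
  rw [Set.mem_range, Finset.mem_coe, ← Finset.mem_sort (α := Q) (· ≤ ·), List.mem_iff_get]
  exact ((finCongr (Finset.length_sort (s := C) (· ≤ ·))).symm.surjective.exists
    (p := fun n => (C.sort (· ≤ ·)).get n = c)).symm

section FunctionDomain

variable {P Q A : Type} [LinearOrder Q] {Γ : Set (MFormula P Q A)}

theorem clOp_iUnion_hsOp_tupleV_vSig (hΓ : MCSM (SLKVFm P Q A) Γ) (i : A) (σ : Q → Bool)
    (C : Finset Q) : clOp Γ i (⋃ k, hsOp Γ i (tupleV (vSig σ) C k)) = clOp Γ i ↑C := by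
  have := (hΓ.closureOperator i).closure_iSup_closure fun k => {tupleV id C k}
  simp only [MCSM.closureOperator_apply, Set.iSup_eq_iUnion, Set.iUnion_singleton_eq_range,
    range_tupleV_id] at this
  exact this

theorem hsOp_subset_clOp_of_Kf (hΓ : MCSM (SLKVFm P Q A) Γ) {i : A} {C : Finset Q} {d : Q}
    {T : Set Q} (hKf : MFormula.Kf i C d ∈ Γ) (hCT : ↑C ⊆ clOp Γ i T) (b : Bool) :
    hsOp Γ i (d, b) ⊆ clOp Γ i T := by
  have hdC : d ∈ clOp Γ i ↑C := hΓ.mem_clOp_coe_iff.2 hKf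
  have hCT' : clOp Γ i ↑C ⊆ clOp Γ i T := (hΓ.closureOperator i).le_closure_iff.1 hCT
  exact (hΓ.closureOperator i).le_closure_iff.1 (Set.singleton_subset_iff.2 (hCT' hdC))

theorem exists_mem_FiG_of_Kf_mem (hΓ : MCSM (SLKVFm P Q A) Γ) {i : A} {C : Finset Q} {d : Q}
    {S : Set (Q → Bool)} (hfun : ∀ σ₁ ∈ S, ∀ σ₂ ∈ S, (∀ c ∈ C, σ₁ c = σ₂ c) → σ₁ d = σ₂ d)
    (hKf : MFormula.Kf i C d ∈ Γ) :
    ∃ f : (Fin C.card → Q × Bool) → Q × Bool,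
      (⟨C.card, f⟩ : Σ n : ℕ, (Fin n → Q × Bool) → Q × Bool) ∈ FiG Γ i ∧
      ∀ σ ∈ S, vSig σ d = f (tupleV (vSig σ) C) := by
  let args : S → Fin C.card → Q × Bool := fun σ => tupleV (vSig σ) C
  let val : S → Q × Bool := fun σ => vSig σ d
  -- off `Σ`: a projection, or for `C = ∅` a constant, allowed there since `Kf_i(∅,d) ∈ Γ`
  let other : (Fin C.card → Q × Bool) → Q × Bool := fun x =>
    if h : 0 < C.card then x ⟨0, h⟩ else (d, false)
  have hfactors : val.FactorsThrough args := by
    intro σ₁ σ₂ hargs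
    refine congrArg (Prod.mk d) (hfun σ₁ σ₁.2 σ₂ σ₂.2 fun c hc => ?_)
    obtain ⟨k, rfl⟩ : c ∈ Set.range (tupleV id C) := by rwa [range_tupleV_id]
    exact congrArg Prod.snd (congrFun hargs k)
  refine ⟨Function.extend args val other, fun x => ?_, fun σ hσ =>
    (hfactors.extend_apply other ⟨σ, hσ⟩).symm⟩
  change hsOp Γ i (Function.extend args val other x) ⊆ _
  by_cases hx : ∃ σ, args σ = x
  · obtain ⟨σ, rfl⟩ := hx
    rw [hfactors.extend_apply, clOp_iUnion_hsOp_tupleV_vSig hΓ]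
    exact hsOp_subset_clOp_of_Kf hΓ hKf (hΓ.subset_clOp i _) _
  · rw [Function.extend_apply' _ _ _ hx]
    by_cases hC : 0 < C.card
    · simp only [other, dif_pos hC]
      exact (Set.subset_iUnion (fun k => hsOp Γ i (x k)) _).trans (hΓ.subset_clOp i _)
    · simp only [other, dif_neg hC]
      refine hsOp_subset_clOp_of_Kf hΓ hKf ?_ _
      simp [Finset.card_eq_zero.1 (Nat.eq_zero_of_not_pos hC)]

theorem Kf_mem_of_mem_FiG (hΓ : MCSM (SLKVFm P Q A) Γ) {i : A} {C : Finset Q} {d : Q}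
    {σ : Q → Bool} {f : (Fin C.card → Q × Bool) → Q × Bool}
    (hf : (⟨C.card, f⟩ : Σ n : ℕ, (Fin n → Q × Bool) → Q × Bool) ∈ FiG Γ i)
    (hσ : vSig σ d = f (tupleV (vSig σ) C)) : MFormula.Kf i C d ∈ Γ := by
  have hsub : hsOp Γ i (f (tupleV (vSig σ) C)) ⊆ _ := hf (tupleV (vSig σ) C)
  rw [← hσ, hsOp_vSig, clOp_iUnion_hsOp_tupleV_vSig hΓ] at hsub
  exact hΓ.mem_clOp_coe_iff.1 (hsub (hΓ.subset_clOp i {d} rfl))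

end FunctionDomain

theorem statement17_general (P Q A : Type) [LinearOrder Q]
    (Γ : Set (MFormula P Q A)) (hΓ : MCSM (SLKVFm P Q A) Γ) (i : A) :
    ∀ (C : Finset Q) (d : Q) (S : Set (Q → Bool)),
      ((∀ σ₁ ∈ S, ∀ σ₂ ∈ S, (∀ c ∈ C, σ₁ c = σ₂ c) → σ₁ d = σ₂ d) →
        MFormula.Kf i C d ∈ Γ →
          ∃ f : (Fin C.card → Q × Bool) → Q × Bool,
            (⟨C.card, f⟩ : Σ n : ℕ, (Fin n → Q × Bool) → Q × Bool) ∈ FiG Γ i ∧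
            ∀ σ ∈ S, vSig σ d = f (tupleV (vSig σ) C)) ∧
      (MFormula.Kf i C d ∉ Γ →
        ∀ σ ∈ S, ∀ f : (Fin C.card → Q × Bool) → Q × Bool,
          (⟨C.card, f⟩ : Σ n : ℕ, (Fin n → Q × Bool) → Q × Bool) ∈ FiG Γ i →
            vSig σ d ≠ f (tupleV (vSig σ) C)) :=
  fun _ _ _ =>
    ⟨exists_mem_FiG_of_Kf_mem hΓ,
      fun hKf _ _ _ hf hσ => hKf (Kf_mem_of_mem_FiG hΓ hf hσ)⟩

theorem statement17 (P Q A : Type) [Countable P] [Infinite P] [LinearOrder Q]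
    (Γ : Set (MFormula P Q A)) (hΓ : MCSM (SLKVFm P Q A) Γ) (i : A) :
    ∀ (C : Finset Q) (d : Q) (S : Set (Q → Bool)),
      ((∀ σ₁ ∈ S, ∀ σ₂ ∈ S, (∀ c ∈ C, σ₁ c = σ₂ c) → σ₁ d = σ₂ d) →
        MFormula.Kf i C d ∈ Γ →
          ∃ f : (Fin C.card → Q × Bool) → Q × Bool,
            (⟨C.card, f⟩ : Σ n : ℕ, (Fin n → Q × Bool) → Q × Bool) ∈ FiG Γ i ∧
            ∀ σ ∈ S, vSig σ d = f (tupleV (vSig σ) C)) ∧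
      (MFormula.Kf i C d ∉ Γ →
        ∀ σ ∈ S, ∀ f : (Fin C.card → Q × Bool) → Q × Bool,
          (⟨C.card, f⟩ : Σ n : ℕ, (Fin n → Q × Bool) → Q × Bool) ∈ FiG Γ i →
            vSig σ d ≠ f (tupleV (vSig σ) C)) :=
  statement17_general P Q A Γ hΓ i
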